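/- arXiv:1710.08285 — 3 statements merged into one kernel-verified Lean document; each statement's English description precedes it below -/
import Mathlib

section
/- If f is a strong rigid quotient map between finite ordered oriented graphs (V,ρ,<) and (W,σ,⊏), then for every w ∈ W the minimum of f̂⁻¹(w,w) with respect to <_sal is a diagonal pair (x, x) with x = min f⁻¹(w). -/
/-- The anti-lexicographic order on pairs. -/
def pairAlex {A : Type*} [LinearOrder A] (p q : A × A) : Prop :=
  p.2 < q.2 ∨ (p.2 = q.2 ∧ p.1 < q.1)

/-- The anti-lexicographic order on subsets of a finite chain. -/
def setAlex {A : Type*} [LinearOrder A] (X Y : Finset A) : Prop :=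
  X ⊂ Y ∨ (¬ X ⊆ Y ∧ ¬ Y ⊆ X ∧ (X \ Y).max < (Y \ X).max)

/-- The special anti-lexicographic order `<_sal` on `A²`. -/
def sal {A : Type*} [LinearOrder A] (p q : A × A) : Prop :=
  if p.1 = p.2 then
    (if q.1 = q.2 then p.1 < q.1 else True)
  else
    (if q.1 = q.2 then False
     else if ({p.1, p.2} : Finset A) = {q.1, q.2} then pairAlex p q
     else setAlex {p.1, p.2} {q.1, q.2})

/-- `(V, ρ)` is an oriented graph: `ρ` is reflexive and antisymmetric off the diagonal. -/
def IsOGraph {V : Type*} (ρ : Set (V × V)) : Prop :=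
  (∀ v : V, (v, v) ∈ ρ) ∧ ∀ p ∈ ρ, p.1 ≠ p.2 → (p.2, p.1) ∉ ρ

/-- `ρ_< = Δ_V ∪ {(v₁,v₂) ∈ ρ : v₁ < v₂}`. -/
def rlt {V : Type*} [LinearOrder V] (ρ : Set (V × V)) : Set (V × V) :=
  {p | p.1 = p.2 ∨ (p ∈ ρ ∧ p.1 < p.2)}

/-- `(ρ_>)⁻¹`: the converse of `Δ_V ∪ {(v₁,v₂) ∈ ρ : v₁ > v₂}`. -/
def rgtInv {V : Type*} [LinearOrder V] (ρ : Set (V × V)) : Set (V × V) :=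
  {p | p.1 = p.2 ∨ ((p.2, p.1) ∈ ρ ∧ p.1 < p.2)}

/-- The induced map `f̂(v₁,v₂) = (f v₁, f v₂)`. -/
def fhat {V W : Type*} (f : V → W) : V × V → W × W := fun p => (f p.1, f p.2)

/-- `f` is a homomorphism of (oriented) graphs. -/
def IsHom {V W : Type*} (f : V → W) (ρ : Set (V × V)) (σ : Set (W × W)) : Prop :=
  ∀ p ∈ ρ, fhat f p ∈ σ

/-- `m` is the minimum of `P` with respect to the strict relation `r`. -/
def IsMinWrt {X : Type*} (r : X → X → Prop) (P : Set X) (m : X) : Prop :=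
  m ∈ P ∧ ∀ p ∈ P, p ≠ m → r m p

/-- `g` is a rigid surjection from `(S, r)` onto `(T, s)`:
it maps `S` onto `T` and minima of preimages are increasing. -/
def RigidSurjOn {X Y : Type*} (r : X → X → Prop) (s : Y → Y → Prop)
    (S : Set X) (T : Set Y) (g : X → Y) : Prop :=
  (∀ x ∈ S, g x ∈ T) ∧ (∀ y ∈ T, ∃ x ∈ S, g x = y) ∧
    ∀ y₁ ∈ T, ∀ y₂ ∈ T, s y₁ y₂ → ∀ m₁ m₂ : X,
      IsMinWrt r {x ∈ S | g x = y₁} m₁ → IsMinWrt r {x ∈ S | g x = y₂} m₂ → r m₁ m₂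

/-- `f` is a strong rigid quotient map between the ordered oriented graphs
`(V, ρ, <)` and `(W, σ, <)`. -/
def IsSRQ {V W : Type*} [LinearOrder V] [LinearOrder W]
    (ρ : Set (V × V)) (σ : Set (W × W)) (f : V → W) : Prop :=
  IsHom f ρ σ ∧
    RigidSurjOn sal sal (rlt ρ) (rlt σ) (fhat f) ∧
    RigidSurjOn sal sal (rgtInv ρ) (rgtInv σ) (fhat f)

/-- For a strong rigid quotient map `f` and any `w ∈ W`, the `<_sal`-minimum of
`f̂⁻¹(w,w)` (inside `ρ_<`) is the diagonal pair `(x, x)` with `x = min f⁻¹(w)`. -/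
theorem srq_min_preim_diag {V W : Type*} [Fintype V] [LinearOrder V] [Fintype W] [LinearOrder W]
    (ρ : Set (V × V)) (σ : Set (W × W)) (hρ : IsOGraph ρ) (hσ : IsOGraph σ)
    (f : V → W) (hf : IsSRQ ρ σ f) (w : W) (m : V × V)
    (hm : IsMinWrt sal {p ∈ rlt ρ | fhat f p = (w, w)} m) :
    m.1 = m.2 ∧ IsMinWrt (· < ·) {v : V | f v = w} m.1 := by
  obtain ⟨⟨hmr, hmf⟩, hmin⟩ := hm
  have h1 : f m.1 = w := congrArg Prod.fst hmf
  set Sf := Finset.univ.filter (fun v : V => f v = w) with hSf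
  have hne : Sf.Nonempty := ⟨m.1, by simp [hSf, h1]⟩
  set x := Sf.min' hne with hx
  have hxw : f x = w := by
    have := Sf.min'_mem hne; simpa [hSf] using this
  have hxle : ∀ v, f v = w → x ≤ v := fun v hv => Sf.min'_le v (by simp [hSf, hv])
  have hxm : (x, x) ∈ {p ∈ rlt ρ | fhat f p = (w, w)} := by
    exact ⟨Or.inl rfl, by simp [fhat, hxw]⟩
  have hmx : m = (x, x) := by
    by_contra hne'
    have hs : sal m (x, x) := hmin (x, x) hxm (fun h => hne' h.symm)
    unfold sal at hs
    by_cases hd : m.1 = m.2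
    · simp [hd] at hs
      exact absurd (hd ▸ hxle m.1 h1) (not_le.mpr hs)
    · simp [hd] at hs
  constructor
  · rw [hmx]
  · rw [hmx]
    exact ⟨hxw, fun v hv hvne => lt_of_le_of_ne (hxle v hv) (Ne.symm hvne)⟩
end

section
/- A strong rigid quotient map f between finite ordered oriented graphs (V,ρ,<) and (W,σ,⊏) is a rigid surjection of the underlying chains: whenever u ⊏ v in W, min f⁻¹(u) < min f⁻¹(v). -/
/-- A strong rigid quotient map is a rigid surjection of the underlying chains. -/
theorem srq_rigid {V W : Type*} [Fintype V] [LinearOrder V] [Fintype W] [LinearOrder W]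
    (ρ : Set (V × V)) (σ : Set (W × W)) (hρ : IsOGraph ρ) (hσ : IsOGraph σ)
    (f : V → W) (hf : IsSRQ ρ σ f) :
    ∀ u v : W, u < v → ∀ m₁ m₂ : V,
      IsMinWrt (· < ·) {x : V | f x = u} m₁ →
      IsMinWrt (· < ·) {x : V | f x = v} m₂ → m₁ < m₂ := by
  intro u v huv m₁ m₂ h₁ h₂
  obtain ⟨_, ⟨_, _, hrig⟩, _⟩ := hf
  have hmin : ∀ (w : W) (m : V), IsMinWrt (· < ·) {x : V | f x = w} m →
      IsMinWrt sal {p ∈ rlt ρ | fhat f p = (w, w)} (m, m) := by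
    intro w m hm
    refine ⟨⟨Or.inl rfl, ?_⟩, ?_⟩
    · simp [fhat, hm.1.out]
    · rintro ⟨a, b⟩ ⟨hab, hfab⟩ hne
      simp only [fhat, Prod.mk.injEq] at hfab
      by_cases hd : a = b
      · subst hd
        have hne' : a ≠ m := fun h => hne (by simp [h])
        have := hm.2 a hfab.1 hne'
        simp [sal, this]
      · simp [sal, hd]
  have key : sal (m₁, m₁) (m₂, m₂) :=
    hrig (u, u) (Or.inl rfl) (v, v) (Or.inl rfl) (by simp [sal, huv]) (m₁, m₁) (m₂, m₂)
      (hmin u m₁ h₁) (hmin v m₂ h₂)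
  simpa [sal] using key
end

section
/- If categories C and D both have the property that hom-sets between any two objects are finite, and both have the Ramsey property, then the product category C × D has the Ramsey property. -/
open CategoryTheory

/-- A category has the Ramsey property if for every `k ≥ 2` and all objects `A`, `B`
with `hom(A,B) ≠ ∅` there is an object `C` such that every `k`-coloring of `hom(A,C)`
admits `w ∈ hom(B,C)` with `w ∘ hom(A,B)` monochromatic. -/
def HasRamsey (C : Type*) [Category C] : Prop :=
  ∀ (k : ℕ), 2 ≤ k → ∀ A B : C, Nonempty (A ⟶ B) →
    ∃ Cob : C, ∀ χ : (A ⟶ Cob) → Fin k,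
      ∃ (i : Fin k) (w : B ⟶ Cob), ∀ f : A ⟶ B, χ (f ≫ w) = i

/-- If hom-finite categories `C` and `D` have the Ramsey property, so does `C × D`. -/
theorem prod_hasRamsey (C : Type*) (D : Type*) [Category C] [Category D]
    (hC : ∀ A B : C, Finite (A ⟶ B)) (hD : ∀ A B : D, Finite (A ⟶ B))
    (hrC : HasRamsey C) (hrD : HasRamsey D) : HasRamsey (C × D) := by
  intro k hk A B hAB
  obtain ⟨f0⟩ := hAB
  obtain ⟨C1, hC1⟩ := hrC k hk A.1 B.1 ⟨f0.1⟩
  haveI : Fintype (A.1 ⟶ C1) := @Fintype.ofFinite _ (hC A.1 C1)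
  obtain ⟨_, w0, _⟩ := hC1 (fun _ => ⟨0, by omega⟩)
  haveI : Nonempty (A.1 ⟶ C1) := ⟨f0.1 ≫ w0⟩
  haveI : DecidableEq (A.1 ⟶ C1) := Classical.decEq _
  set N := Fintype.card ((A.1 ⟶ C1) → Fin k) with hNdef
  have e : ((A.1 ⟶ C1) → Fin k) ≃ Fin N := Fintype.equivFin _
  have hN : 2 ≤ N := by
    have h1 : N = k ^ Fintype.card (A.1 ⟶ C1) := by
      simp [hNdef, Fintype.card_fun]
    have hcard : 1 ≤ Fintype.card (A.1 ⟶ C1) := Fintype.card_pos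
    calc 2 ≤ k := hk
      _ = k ^ 1 := (pow_one k).symm
      _ ≤ k ^ Fintype.card (A.1 ⟶ C1) := Nat.pow_le_pow_right (by omega) hcard
      _ = N := h1.symm
  obtain ⟨C2, hC2⟩ := hrD N hN A.2 B.2 ⟨f0.2⟩
  refine ⟨(C1, C2), ?_⟩
  intro χ
  obtain ⟨j, w2, hw2⟩ := hC2 (fun g => e (fun f => χ (f, g)))
  set Φ : (A.1 ⟶ C1) → Fin k := e.symm j with hΦ
  obtain ⟨i, w1, hw1⟩ := hC1 Φ
  refine ⟨i, (w1, w2), ?_⟩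
  intro f
  have h2 : χ (f.1 ≫ w1, f.2 ≫ w2) = Φ (f.1 ≫ w1) := by
    have := congrArg (fun φ => φ (f.1 ≫ w1)) (congrArg e.symm (hw2 f.2))
    simpa [hΦ] using this
  have hcomp : (f ≫ ((w1, w2) : B ⟶ (C1, C2))) = (f.1 ≫ w1, f.2 ≫ w2) := rfl
  rw [hcomp, h2]
  exact hw1 f.1
end
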